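/- Let A be an NFA with no unreachable states whose unique closed communicating class is aperiodic, and let Ψ be a merge operation from A to Ã. Then Ã contains a single closed communicating class which is also aperiodic. -/
import Mathlib


/-- A nondeterministic finite automaton with state set `Q` over alphabet `σ`,
with a distinguished initial state, transition function and termination function. -/
structure NFA' (σ Q : Type) where
  start : Q
  step : Q → σ → Set Q
  accept : Q → Bool

namespace NFA'

variable {σ Q Q' : Type}

/-- `A.Reaches q q'` means `q'` is accessible from `q`, i.e. `q' ∈ τ⋆(q)`. -/
def Reaches (A : NFA' σ Q) : Q → Q → Prop :=
  Relation.ReflTransGen (fun p q => ∃ a, q ∈ A.step p a)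

/-- A state is recurrent iff it belongs to a closed communicating class,
iff every state accessible from it can access it back. -/
def Recurrent (A : NFA' σ Q) (q : Q) : Prop :=
  ∀ q', A.Reaches q q' → A.Reaches q' q

/-- The communicating class of `q`: states that communicate with `q`. -/
def commClass (A : NFA' σ Q) (q : Q) : Set Q :=
  {q' | A.Reaches q q' ∧ A.Reaches q' q}

/-- A set of states is closed if no string leads outside of it: `τ⋆(C) = C`. -/
def Closed (A : NFA' σ Q) (C : Set Q) : Prop :=
  ∀ q ∈ C, ∀ q', A.Reaches q q' → q' ∈ C

/-- The automaton has a single closed communicating class: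
all recurrent states communicate with each other. -/
def SingleClosedClass (A : NFA' σ Q) : Prop :=
  ∀ q q', A.Recurrent q → A.Recurrent q' → A.Reaches q q'

/-- `τ₁(S)`: all states reachable from `S` by a single transition. -/
def step1 (A : NFA' σ Q) (S : Set Q) : Set Q :=
  {q' | ∃ q ∈ S, ∃ a, q' ∈ A.step q a}

/-- A set of states is `k`-periodic if it admits a partition into `k` (nonempty,
pairwise disjoint) parts `P 0, …, P (k-1)` with `τ₁(P i) = P ((i+1) mod k)`. -/
def Periodic (A : NFA' σ Q) (C : Set Q) (k : ℕ) : Prop :=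
  ∃ P : Fin k → Set Q,
    (∀ i, (P i).Nonempty) ∧
    (∀ i j, i ≠ j → Disjoint (P i) (P j)) ∧
    (⋃ i, P i) = C ∧
    ∀ i : Fin k, A.step1 (P i) = P ⟨(i.val + 1) % k, Nat.mod_lt _ i.pos⟩

/-- A set of states is aperiodic if it is not `k`-periodic for any `k > 1`. -/
def Aperiodic (A : NFA' σ Q) (C : Set Q) : Prop :=
  ∀ k, 1 < k → ¬ A.Periodic C k

/-- The transition function extended to strings (lists of symbols). -/
def stepStr (A : NFA' σ Q) : Q → List σ → Set Q
  | q, [] => {q}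
  | q, a :: x => ⋃ p ∈ A.step q a, A.stepStr p x

/-- A merge operation from `A` to `B` realized by a map `Ψ` on states. -/
structure MergeOp (A : NFA' σ Q) (B : NFA' σ Q') (Ψ : Q → Q') : Prop where
  surjective : Function.Surjective Ψ
  start_eq : Ψ A.start = B.start
  accept_eq : ∀ q, A.accept q = B.accept (Ψ q)
  step_mem : ∀ q a q', q' ∈ A.step q a → Ψ q' ∈ B.step (Ψ q) a

end NFA'

open NFA'

lemma NFA'.Reaches.trans' {σ Q : Type} {A : NFA' σ Q} {a b c : Q}
    (h1 : A.Reaches a b) (h2 : A.Reaches b c) : A.Reaches a c :=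
  Relation.ReflTransGen.trans h1 h2

lemma NFA'.reaches_map {σ Q Q' : Type} {A : NFA' σ Q} {B : NFA' σ Q'} {Ψ : Q → Q'}
    (h : MergeOp A B Ψ) {q p : Q} (hr : A.Reaches q p) : B.Reaches (Ψ q) (Ψ p) := by
  induction hr with
  | refl => exact Relation.ReflTransGen.refl
  | tail _ hstep ih =>
      obtain ⟨a, ha⟩ := hstep
      exact ih.tail ⟨a, h.step_mem _ _ _ ha⟩

lemma NFA'.exists_recurrent {σ Q : Type} [Fintype Q] (A : NFA' σ Q) (q : Q) :
    ∃ r, A.Reaches q r ∧ A.Recurrent r := by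
  classical
  obtain ⟨r, hr, hmin⟩ := Set.exists_min_image {p | A.Reaches q p}
    (fun p => ({x | A.Reaches p x}).ncard) (Set.toFinite _) ⟨q, Relation.ReflTransGen.refl⟩
  refine ⟨r, hr, fun x hrx => ?_⟩
  have hsub : {y | A.Reaches x y} ⊆ {y | A.Reaches r y} :=
    fun y hy => NFA'.Reaches.trans' hrx hy
  have hle := hmin x (NFA'.Reaches.trans' hr hrx)
  have heq : {y | A.Reaches x y} = {y | A.Reaches r y} :=
    Set.eq_of_subset_of_ncard_le hsub hle (Set.toFinite _)
  have : r ∈ {y | A.Reaches x y} := by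
    rw [heq]; exact Relation.ReflTransGen.refl
  exact this

lemma NFA'.recurrent_of_reaches {σ Q : Type} {A : NFA' σ Q} {q q' : Q}
    (hq : A.Recurrent q) (h : A.Reaches q q') : A.Recurrent q' := by
  intro y hy
  exact NFA'.Reaches.trans' (hq y (NFA'.Reaches.trans' h hy)) h

lemma NFA'.exists_pred {σ Q : Type} [Nonempty σ] {A : NFA' σ Q}
    (htotal : ∀ q a, (A.step q a).Nonempty) {q' : Q} (hq' : A.Recurrent q') :
    ∃ q, A.Recurrent q ∧ ∃ a, q' ∈ A.step q a := by
  obtain ⟨a0⟩ := ‹Nonempty σ›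
  obtain ⟨p, hp⟩ := htotal q' a0
  have hq'p : A.Reaches q' p := Relation.ReflTransGen.single ⟨a0, hp⟩
  have hpq' : A.Reaches p q' := hq' p hq'p
  rcases (Relation.ReflTransGen.cases_tail hpq') with rfl | ⟨c, hpc, hc⟩
  · exact ⟨q', hq', a0, hp⟩
  · exact ⟨c, NFA'.recurrent_of_reaches hq' (NFA'.Reaches.trans' hq'p hpc), hc⟩

lemma mod_succ_inj' {k i j : ℕ} (hi : i < k) (hj : j < k)
    (h : (i + 1) % k = (j + 1) % k) : i = j := by
  have h1 : (i + 1) % k = if i + 1 = k then 0 else i + 1 := by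
    split
    · simp [*]
    · exact Nat.mod_eq_of_lt (by omega)
  have h2 : (j + 1) % k = if j + 1 = k then 0 else j + 1 := by
    split
    · simp [*]
    · exact Nat.mod_eq_of_lt (by omega)
  rw [h1, h2] at h
  split_ifs at h <;> omega

/-- If `A` has no unreachable states and a single closed communicating class which is
aperiodic, then any merge of `A` has a single closed communicating class which is
also aperiodic. -/
theorem stmt_17 {σ Q Q' : Type} [Fintype Q] [Nonempty σ]
    (A : NFA' σ Q) (B : NFA' σ Q') (Ψ : Q → Q')
    (htotal : ∀ q a, (A.step q a).Nonempty)
    (hreach : ∀ q : Q, A.Reaches A.start q)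
    (hsingle : A.SingleClosedClass)
    (haper : A.Aperiodic {q | A.Recurrent q})
    (hΨ : MergeOp A B Ψ) :
    B.SingleClosedClass ∧ B.Aperiodic {q' | B.Recurrent q'} := by
  classical
  obtain ⟨r0, -, hr0⟩ := A.exists_recurrent A.start
  have lift : ∀ {q p : Q}, A.Reaches q p → B.Reaches (Ψ q) (Ψ p) :=
    fun h => NFA'.reaches_map hΨ h
  have hto : ∀ x : Q', B.Reaches x (Ψ r0) := by
    intro x
    obtain ⟨p, rfl⟩ := hΨ.surjective x
    obtain ⟨r1, hpr1, hr1⟩ := A.exists_recurrent p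
    exact (lift hpr1).trans' (lift (hsingle r1 r0 hr1 hr0))
  have himg : ∀ r : Q, A.Recurrent r → B.Recurrent (Ψ r) := by
    intro r hr x hx
    exact (hto x).trans' (lift (hsingle r0 r hr0 hr))
  constructor
  · intro x y _ hy
    exact (hto x).trans' (hy (Ψ r0) (hto y))
  · intro k hk
    rintro ⟨Pt, hne, hdisj, huni, hstepPt⟩
    set P : Fin k → Set Q := fun i => {q | A.Recurrent q ∧ Ψ q ∈ Pt i} with hP
    have hPstep : ∀ i : Fin k, A.step1 (P i) = P ⟨(i.val + 1) % k, Nat.mod_lt _ i.pos⟩ := by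
      intro i
      ext q'
      constructor
      · rintro ⟨q, ⟨hqrec, hqi⟩, a, hqa⟩
        have h1 : A.Recurrent q' :=
          NFA'.recurrent_of_reaches hqrec (Relation.ReflTransGen.single ⟨a, hqa⟩)
        have h2 : Ψ q' ∈ B.step1 (Pt i) := ⟨Ψ q, hqi, a, hΨ.step_mem _ _ _ hqa⟩
        rw [hstepPt i] at h2
        exact ⟨h1, h2⟩
      · rintro ⟨hq'rec, hq'i⟩
        obtain ⟨q, hqrec, a, hqa⟩ := NFA'.exists_pred htotal hq'rec
        have hqB : Ψ q ∈ ⋃ j, Pt j := by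
          rw [huni]; exact himg q hqrec
        obtain ⟨j, hj⟩ := Set.mem_iUnion.mp hqB
        have h2 : Ψ q' ∈ Pt ⟨(j.val + 1) % k, Nat.mod_lt _ j.pos⟩ := by
          rw [← hstepPt j]; exact ⟨Ψ q, hj, a, hΨ.step_mem _ _ _ hqa⟩
        have hsucc : ((j.val + 1) % k : ℕ) = (i.val + 1) % k := by
          by_contra hne'
          have hd := hdisj ⟨(j.val + 1) % k, Nat.mod_lt _ j.pos⟩
            ⟨(i.val + 1) % k, Nat.mod_lt _ i.pos⟩ (by simpa [Fin.ext_iff] using hne')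
          exact (Set.disjoint_left.mp hd h2) hq'i
        have hij : j = i := Fin.ext (mod_succ_inj' j.isLt i.isLt hsucc)
        exact ⟨q, ⟨hqrec, hij ▸ hj⟩, a, hqa⟩
    have hstep1ne : ∀ i : Fin k,
        (P i).Nonempty → (P ⟨(i.val + 1) % k, Nat.mod_lt _ i.pos⟩).Nonempty := by
      rintro i ⟨q, hq⟩
      obtain ⟨a0⟩ := ‹Nonempty σ›
      obtain ⟨p, hp⟩ := htotal q a0
      refine ⟨p, ?_⟩
      rw [← hPstep i]
      exact ⟨q, hq, a0, hp⟩
    have hr0mem : Ψ r0 ∈ ⋃ i, Pt i := by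
      rw [huni]; exact himg r0 hr0
    obtain ⟨i0, hi0⟩ := Set.mem_iUnion.mp hr0mem
    have hcyc : ∀ n : ℕ, (P ⟨(i0.val + n) % k, Nat.mod_lt _ i0.pos⟩).Nonempty := by
      intro n
      induction n with
      | zero =>
        have he : (⟨(i0.val + 0) % k, Nat.mod_lt _ i0.pos⟩ : Fin k) = i0 :=
          Fin.ext (by simp [Nat.mod_eq_of_lt i0.isLt])
        rw [he]
        exact ⟨r0, hr0, hi0⟩
      | succ n ih =>
        have h1 := hstep1ne _ ih
        have he : (⟨((i0.val + n) % k + 1) % k,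
            Nat.mod_lt _ (Fin.mk ((i0.val + n) % k) (Nat.mod_lt _ i0.pos)).pos⟩ : Fin k)
            = ⟨(i0.val + (n + 1)) % k, Nat.mod_lt _ i0.pos⟩ := by
          apply Fin.ext
          show ((i0.val + n) % k + 1) % k = (i0.val + (n + 1)) % k
          conv_rhs => rw [← Nat.add_assoc, Nat.add_mod (i0.val + n) 1 k,
            Nat.mod_eq_of_lt hk]
        rw [he] at h1
        exact h1
    have hPne : ∀ j : Fin k, (P j).Nonempty := by
      intro j
      have h := hcyc (j.val + k - i0.val)
      have hi0lt := i0.isLt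
      have he : (⟨(i0.val + (j.val + k - i0.val)) % k, Nat.mod_lt _ i0.pos⟩ : Fin k) = j := by
        apply Fin.ext
        have h1 : i0.val + (j.val + k - i0.val) = j.val + k := by omega
        show (i0.val + (j.val + k - i0.val)) % k = j.val
        rw [h1, Nat.add_mod_right, Nat.mod_eq_of_lt j.isLt]
      rwa [he] at h
    have hPdisj : ∀ i j, i ≠ j → Disjoint (P i) (P j) := by
      intro i j hij
      rw [Set.disjoint_left]
      rintro q ⟨-, hqi⟩ ⟨-, hqj⟩
      exact (Set.disjoint_left.mp (hdisj i j hij) hqi) hqj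
    have hPuni : (⋃ i, P i) = {q | A.Recurrent q} := by
      ext q
      simp only [Set.mem_iUnion, Set.mem_setOf_eq, hP]
      constructor
      · rintro ⟨i, hrec, -⟩; exact hrec
      · intro hrec
        have hm : Ψ q ∈ ⋃ i, Pt i := by rw [huni]; exact himg q hrec
        obtain ⟨i, hi⟩ := Set.mem_iUnion.mp hm
        exact ⟨i, hrec, hi⟩
    exact haper k hk ⟨P, hPne, hPdisj, hPuni, hPstep⟩
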